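/- Let R be a commutative ring (e.g. R = ℝ) and a₀, a₁, a₂ ∈ R. Let S₂ be the 10×10 matrix over R whose nonzero entries (row, column indices 1..10) are: S₂[1,1] = 2a₀; S₂[2,3] = −a₁; S₂[2,4] = −a₂; S₂[3,1] = a₁; S₂[3,3] = a₀; S₂[4,1] = a₂; S₂[4,4] = a₀; S₂[5,5] = −2a₀; S₂[5,6] = −2a₁; S₂[5,7] = −2a₂; S₂[6,2] = a₁; S₂[6,6] = −a₀; S₂[6,8] = −a₁; S₂[6,9] = −a₂; S₂[7,2] = a₂; S₂[7,7] = −a₀; S₂[7,9] = −a₁; S₂[7,10] = −a₂; S₂[8,3] = 2a₁; S₂[9,3] = a₂; S₂[9,4] = a₁; S₂[10,4] = 2a₂. Then the characteristic polynomial of S₂ is X⁴(X − a₀)²(X + a₀)²(X − 2a₀)(X + 2a₀) = X⁴(X² − a₀²)²(X² − 4a₀²). In particular, over ℝ the eigenvalues of S₂ (with algebraic multiplicity) are 0 (four times), −2a₀, −a₀ (twice), a₀ (twice), and 2a₀, independently of a₁ and a₂. -/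

import Mathlib

/-!
Draw an edge `i → j` for every nonzero off-diagonal entry `S₂[i,j]`. This graph is acyclic, and
listing the (0-based) indices in the topological order `4, 5, 6, 1, 7, 8, 9, 2, 3, 0` makes `S₂`
upper triangular. Its characteristic polynomial is therefore `∏ (X - d)` over the diagonal entries
`d = 2a₀, 0, a₀, a₀, -2a₀, -a₀, -a₀, 0, 0, 0`, whatever `a₁` and `a₂` are.
-/

open Matrix Polynomial

/-- The `10×10` matrix `S₍₂₎` appearing in the subprincipal operator of the
linearized gauge-fixed Einstein operator on symmetric 2-tensors at the conormal
bundle of the event horizon, for arbitrary parameters `a₀, a₁, a₂`. -/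
def kerrS2 (R : Type*) [CommRing R] (a₀ a₁ a₂ : R) :
    Matrix (Fin 10) (Fin 10) R :=
  !![2*a₀, 0, 0, 0, 0, 0, 0, 0, 0, 0;
     0, 0, -a₁, -a₂, 0, 0, 0, 0, 0, 0;
     a₁, 0, a₀, 0, 0, 0, 0, 0, 0, 0;
     a₂, 0, 0, a₀, 0, 0, 0, 0, 0, 0;
     0, 0, 0, 0, -(2*a₀), -(2*a₁), -(2*a₂), 0, 0, 0;
     0, a₁, 0, 0, 0, -a₀, 0, -a₁, -a₂, 0;
     0, a₂, 0, 0, 0, 0, -a₀, 0, -a₁, -a₂;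
     0, 0, 2*a₁, 0, 0, 0, 0, 0, 0, 0;
     0, 0, a₂, a₁, 0, 0, 0, 0, 0, 0;
     0, 0, 0, 2*a₂, 0, 0, 0, 0, 0, 0]

namespace Matrix

variable {R m n : Type*} [CommRing R] [Fintype m] [LinearOrder m] [Fintype n] [DecidableEq n]

theorem charpoly_eq_prod_of_isUpperTriangular_submatrix (M : Matrix n n R) (σ : m ≃ n)
    (h : (M.submatrix σ σ).IsUpperTriangular) :
    M.charpoly = ∏ i, (X - C (M i i)) := by
  rw [← charpoly_reindex σ.symm, reindex_apply, Equiv.symm_symm,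
    charpoly_of_isUpperTriangular _ h, ← Equiv.prod_comp σ]
  rfl

end Matrix

noncomputable def kerrS2Order : Equiv.Perm (Fin 10) :=
  Equiv.ofBijective ![4, 5, 6, 1, 7, 8, 9, 2, 3, 0] (by decide)

theorem kerrS2_submatrix_kerrS2Order_isUpperTriangular (R : Type*) [CommRing R] (a₀ a₁ a₂ : R) :
    ((kerrS2 R a₀ a₁ a₂).submatrix kerrS2Order kerrS2Order).IsUpperTriangular := by
  intro i j hji
  fin_cases i <;> fin_cases j <;> first | rfl | exact absurd hji (by decide)

theorem kerrS2_diag (R : Type*) [CommRing R] (a₀ a₁ a₂ : R) :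
    (kerrS2 R a₀ a₁ a₂).diag = ![2 * a₀, 0, a₀, a₀, -(2 * a₀), -a₀, -a₀, 0, 0, 0] := by
  ext i
  fin_cases i <;> rfl

/-- The characteristic polynomial of `S₍₂₎` is
`X⁴(X − a₀)²(X + a₀)²(X − 2a₀)(X + 2a₀) = X⁴(X² − a₀²)²(X² − 4a₀²)`; in
particular the eigenvalues of `S₍₂₎` (with algebraic multiplicity) are `0`
(four times), `−2a₀`, `−a₀` (twice), `a₀` (twice), and `2a₀`, independent of
`a₁` and `a₂`. -/
theorem kerrS2_charpoly (R : Type*) [CommRing R] (a₀ a₁ a₂ : R) :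
    (kerrS2 R a₀ a₁ a₂).charpoly
        = X ^ 4 * (X - C a₀) ^ 2 * (X + C a₀) ^ 2
            * (X - C (2 * a₀)) * (X + C (2 * a₀)) ∧
      (X ^ 4 * (X - C a₀) ^ 2 * (X + C a₀) ^ 2
            * (X - C (2 * a₀)) * (X + C (2 * a₀)) : R[X])
        = X ^ 4 * (X ^ 2 - C (a₀ ^ 2)) ^ 2 * (X ^ 2 - C (4 * a₀ ^ 2)) := by
  constructor
  · rw [charpoly_eq_prod_of_isUpperTriangular_submatrix _ kerrS2Order
      (kerrS2_submatrix_kerrS2Order_isUpperTriangular R a₀ a₁ a₂)]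
    simp only [← diag_apply, kerrS2_diag, Fin.prod_univ_succ, Fin.prod_univ_zero]
    simp only [Fin.isValue, Fin.succ_zero_eq_one, Fin.succ_one_eq_two, Fin.reduceSucc, cons_val,
      cons_val_zero, cons_val_one, map_mul, map_neg, map_zero, sub_zero, sub_neg_eq_add, mul_one]
    ring
  · simp only [C_mul, C_pow, map_ofNat]
    ring
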